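/- Let n ≥ 2 and g_1,…,g_n ∈ ℝ. Define Q : ℝ^n × ℝ^n → ℝ by Q(x,z) = exp(−(g_1 e^{z_1} + Σ_{i=1}^{n−1}(e^{x_i − z_i} + g_{i+1} e^{z_{i+1} − x_i}) + e^{x_n − z_n})). Then for all (x,z): (−(1/2) Σ_{i=1}^n ∂²/∂x_i² + g_1 e^{x_1} + Σ_{i=1}^{n−1} g_{i+1} e^{x_{i+1}−x_i}) Q = (−(1/2) Σ_{i=1}^n ∂²/∂z_i² − (g_1/2) e^{z_1} + (g_1²/2) e^{2z_1} + Σ_{i=1}^{n−1} g_{i+1} e^{z_{i+1}−z_i}) Q. -/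

import Mathlib

/-- Second partial derivative of `f` along the `i`-th coordinate at the point `p`. -/
noncomputable def pd2 (f : (ℕ → ℝ) → ℝ) (i : ℕ) (p : ℕ → ℝ) : ℝ :=
  deriv (deriv (fun t => f (Function.update p i t))) (p i)

/-!
Write `Q = exp (-Φ)`. As a function of any single variable `t`, `Φ` is a constant plus
`B e^{t-u} + C e^{v-t}`, so `∂²Q = Q ((∂Φ)² - ∂²Φ)` is explicit. With `u_j = e^{x_j - z_j}` and the
link terms `w_j` below, `∂_{x_j} Φ = u_j - w_{j+1}` and `∂_{z_j} Φ = w_j - u_j` (the second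
derivatives being the corresponding sums), while the two potentials are
`u_1 w_1 + ∑ u_{j+1} w_{j+1}` and `-w_1/2 + w_1²/2 + ∑ u_j w_{j+1}`. Both sides are thus `Q` times
polynomials in `u, w`, and these agree because the difference of the two Laplacian sums telescopes.
-/

open Real Finset

theorem deriv_deriv_exp_neg {φ φ' φ'' : ℝ → ℝ} (h1 : ∀ t, HasDerivAt φ (φ' t) t)
    (h2 : ∀ t, HasDerivAt φ' (φ'' t) t) (s : ℝ) :
    deriv (deriv fun t => exp (-φ t)) s = exp (-φ s) * (φ' s ^ 2 - φ'' s) := by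
  have hd : deriv (fun t => exp (-φ t)) = fun t => -(exp (-φ t) * φ' t) :=
    funext fun t => by simpa using ((h1 t).fun_neg.exp).deriv
  rw [hd, (((h1 s).fun_neg.exp.fun_mul (h2 s)).fun_neg).deriv]
  ring

theorem hasDerivAt_add_exp_pair (B C u v t : ℝ) :
    HasDerivAt (fun t => B * exp (t - u) + C * exp (v - t))
      (B * exp (t - u) - C * exp (v - t)) t := by
  refine ((((hasDerivAt_id' t).sub_const u).exp.const_mul B).fun_add
    (((hasDerivAt_id' t).const_sub v).exp.const_mul C)).congr_deriv ?_
  ring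

theorem hasDerivAt_sub_exp_pair (B C u v t : ℝ) :
    HasDerivAt (fun t => B * exp (t - u) - C * exp (v - t))
      (B * exp (t - u) + C * exp (v - t)) t := by
  simpa [sub_eq_add_neg, neg_mul] using hasDerivAt_add_exp_pair B (-C) u v t

theorem pd2_exp_neg_of_separable {Φ : (ℕ → ℝ) → ℝ} {A : ℝ} {s : Finset ℕ} {φ : ℕ → ℝ → ℝ}
    (hΦ : ∀ q, Φ q = A + ∑ j ∈ s, φ j (q j)) {i : ℕ} (hi : i ∈ s) {φ' φ'' : ℝ → ℝ}
    (h1 : ∀ t, HasDerivAt (φ i) (φ' t) t) (h2 : ∀ t, HasDerivAt φ' (φ'' t) t) (p : ℕ → ℝ) :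
    pd2 (fun q => exp (-Φ q)) i p = exp (-Φ p) * (φ' (p i) ^ 2 - φ'' (p i)) := by
  set A' := A + ∑ j ∈ s \ {i}, φ j (p j)
  have hupd : ∀ t, Φ (Function.update p i t) = A' + φ i t := fun t => by
    simp only [hΦ, Function.apply_update (fun j => φ j), sum_update_of_mem hi, A']
    ring
  have hp : Φ p = A' + φ i (p i) := by simpa using hupd (p i)
  simp only [pd2, hupd, hp]
  exact deriv_deriv_exp_neg (fun t => (h1 t).const_add A') h2 (p i)

theorem Finset.sum_Icc_one_succ {M : Type*} [AddCommMonoid M] (f : ℕ → M) (m : ℕ) :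
    ∑ i ∈ Icc 1 (m + 1), f i = f 1 + ∑ i ∈ Icc 1 m, f (i + 1) := by
  rw [← Ico_add_one_right_eq_Icc, ← Ico_add_one_right_eq_Icc, sum_eq_sum_Ico_succ_bot (by omega),
    sum_Ico_add']

theorem toda_intertwining_polynomial_identity (u w : ℕ → ℝ) {n : ℕ} (hn : 1 ≤ n)
    (hw : w (n + 1) = 0) :
    -(1 / 2) * ∑ j ∈ Icc 1 n, ((u j - w (j + 1)) ^ 2 - (u j + w (j + 1)))
        + (u 1 * w 1 + ∑ j ∈ Icc 1 (n - 1), u (j + 1) * w (j + 1))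
      = -(1 / 2) * ∑ j ∈ Icc 1 n, ((w j - u j) ^ 2 - (w j + u j))
        + (-(w 1) / 2 + w 1 ^ 2 / 2 + ∑ j ∈ Icc 1 (n - 1), u j * w (j + 1)) := by
  obtain ⟨m, rfl⟩ : ∃ m, n = m + 1 := ⟨n - 1, by omega⟩
  have hsplit : ∀ j, (u j - w (j + 1)) ^ 2 - (u j + w (j + 1))
      = (w j - u j) ^ 2 - (w j + u j) + ((w (j + 1) ^ 2 - w (j + 1)) - (w j ^ 2 - w j))
        + 2 * (u j * w j) - 2 * (u j * w (j + 1)) := fun j => by ring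
  rw [sum_congr rfl fun j _ => hsplit j, sum_sub_distrib, sum_add_distrib, sum_add_distrib,
    ← mul_sum, ← mul_sum, sum_Icc_sub (by omega) fun j => w j ^ 2 - w j,
    sum_Icc_one_succ fun j => u j * w j, Nat.add_sub_cancel,
    sum_Icc_succ_top (by omega : 1 ≤ m + 1) fun j => u j * w (j + 1), hw]
  ring

noncomputable section

def todaKernelExponent (n : ℕ) (g x z : ℕ → ℝ) : ℝ :=
  g 1 * exp (z 1) + ∑ i ∈ Icc 1 (n - 1), (exp (x i - z i) + g (i + 1) * exp (z (i + 1) - x i))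
    + exp (x n - z n)

/-- `w_j = g_j e^{z_j - x_{j-1}}` under the conventions `x_0 = 0` and `g_{n+1} = 0`, so that the
kernel exponent is `∑_{j=1}^n (e^{x_j - z_j} + w_j)`. -/
def todaKernelLink (n : ℕ) (g x z : ℕ → ℝ) (j : ℕ) : ℝ :=
  (if j ≤ n then g j else 0) * exp (z j - if j = 1 then 0 else x (j - 1))

end

section

variable {n : ℕ} {g : ℕ → ℝ}

theorem todaKernelLink_one (hn : 1 ≤ n) (x z : ℕ → ℝ) :
    todaKernelLink n g x z 1 = g 1 * exp (z 1) := by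
  simp [todaKernelLink, hn]

theorem todaKernelLink_succ {i : ℕ} (hi : 1 ≤ i) (x z : ℕ → ℝ) :
    todaKernelLink n g x z (i + 1)
      = (if i + 1 ≤ n then g (i + 1) else 0) * exp (z (i + 1) - x i) := by
  simp [todaKernelLink, show i ≠ 0 by omega]

theorem todaKernelExponent_eq_sum_in_x (hn : 1 ≤ n) (x z : ℕ → ℝ) :
    todaKernelExponent n g x z = g 1 * exp (z 1) + ∑ j ∈ Icc 1 n,
      (exp (x j - z j) + (if j + 1 ≤ n then g (j + 1) else 0) * exp (z (j + 1) - x j)) := by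
  obtain ⟨m, rfl⟩ : ∃ m, n = m + 1 := ⟨n - 1, by omega⟩
  rw [sum_Icc_succ_top (by omega), todaKernelExponent, Nat.add_sub_cancel]
  have hlow : ∀ j ∈ Icc 1 m, exp (x j - z j) + g (j + 1) * exp (z (j + 1) - x j)
      = exp (x j - z j) + (if j + 1 ≤ m + 1 then g (j + 1) else 0) * exp (z (j + 1) - x j) :=
    fun j hj => by rw [if_pos (by simp at hj; omega)]
  rw [sum_congr rfl hlow, if_neg (by omega), zero_mul, add_zero, add_assoc]

theorem todaKernelExponent_eq_sum_in_z (hn : 1 ≤ n) (x z : ℕ → ℝ) :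
    todaKernelExponent n g x z = ∑ j ∈ Icc 1 n,
      (g j * exp (z j - if j = 1 then 0 else x (j - 1)) + exp (x j - z j)) := by
  obtain ⟨m, rfl⟩ : ∃ m, n = m + 1 := ⟨n - 1, by omega⟩
  have hshift : ∀ j ∈ Icc 1 m, g (j + 1) * exp (z (j + 1) - if j + 1 = 1 then 0 else x (j + 1 - 1))
      = g (j + 1) * exp (z (j + 1) - x j) := fun j hj => by
    rw [if_neg (by simp at hj; omega), Nat.add_sub_cancel]
  rw [sum_add_distrib, sum_Icc_one_succ, sum_congr rfl hshift, sum_Icc_succ_top (by omega),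
    todaKernelExponent, Nat.add_sub_cancel, if_pos rfl, sub_zero, sum_add_distrib]
  ring

theorem sum_pd2_todaKernel_x (hn : 1 ≤ n) (x z : ℕ → ℝ) :
    ∑ i ∈ Icc 1 n, pd2 (fun x' => exp (-todaKernelExponent n g x' z)) i x
      = exp (-todaKernelExponent n g x z) * ∑ i ∈ Icc 1 n,
        ((exp (x i - z i) - todaKernelLink n g x z (i + 1)) ^ 2
          - (exp (x i - z i) + todaKernelLink n g x z (i + 1))) := by
  rw [mul_sum]
  refine sum_congr rfl fun i hi => ?_
  set C := if i + 1 ≤ n then g (i + 1) else 0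
  have h1 : ∀ t, HasDerivAt (fun t => exp (t - z i) + C * exp (z (i + 1) - t))
      (exp (t - z i) - C * exp (z (i + 1) - t)) t := by
    simpa using hasDerivAt_add_exp_pair 1 C (z i) (z (i + 1))
  have h2 : ∀ t, HasDerivAt (fun t => exp (t - z i) - C * exp (z (i + 1) - t))
      (exp (t - z i) + C * exp (z (i + 1) - t)) t := by
    simpa using hasDerivAt_sub_exp_pair 1 C (z i) (z (i + 1))
  rw [pd2_exp_neg_of_separable (φ := fun j t => exp (t - z j)
      + (if j + 1 ≤ n then g (j + 1) else 0) * exp (z (j + 1) - t))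
      (todaKernelExponent_eq_sum_in_x hn · z) hi h1 h2,
    todaKernelLink_succ (mem_Icc.1 hi).1]

theorem sum_pd2_todaKernel_z (hn : 1 ≤ n) (x z : ℕ → ℝ) :
    ∑ i ∈ Icc 1 n, pd2 (fun z' => exp (-todaKernelExponent n g x z')) i z
      = exp (-todaKernelExponent n g x z) * ∑ i ∈ Icc 1 n,
        ((todaKernelLink n g x z i - exp (x i - z i)) ^ 2
          - (todaKernelLink n g x z i + exp (x i - z i))) := by
  rw [mul_sum]
  refine sum_congr rfl fun i hi => ?_
  set a := if i = 1 then 0 else x (i - 1)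
  have h1 : ∀ t, HasDerivAt (fun t => g i * exp (t - a) + exp (x i - t))
      (g i * exp (t - a) - exp (x i - t)) t := by
    simpa using hasDerivAt_add_exp_pair (g i) 1 a (x i)
  have h2 : ∀ t, HasDerivAt (fun t => g i * exp (t - a) - exp (x i - t))
      (g i * exp (t - a) + exp (x i - t)) t := by
    simpa using hasDerivAt_sub_exp_pair (g i) 1 a (x i)
  rw [pd2_exp_neg_of_separable (φ := fun j t => g j * exp (t - if j = 1 then 0 else x (j - 1))
      + exp (x j - t)) (fun q => (todaKernelExponent_eq_sum_in_z hn x q).trans (zero_add _).symm)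
      hi h1 h2,
    todaKernelLink, if_pos (mem_Icc.1 hi).2]

theorem todaPotential_B_eq (hn : 1 ≤ n) (x z : ℕ → ℝ) :
    g 1 * exp (x 1) + ∑ i ∈ Icc 1 (n - 1), g (i + 1) * exp (x (i + 1) - x i)
      = exp (x 1 - z 1) * todaKernelLink n g x z 1
        + ∑ i ∈ Icc 1 (n - 1), exp (x (i + 1) - z (i + 1)) * todaKernelLink n g x z (i + 1) := by
  refine congrArg₂ (· + ·) ?_ (sum_congr rfl fun i hi => ?_)
  · rw [todaKernelLink_one hn, mul_left_comm, ← exp_add, sub_add_cancel]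
  · rw [mem_Icc] at hi
    rw [todaKernelLink_succ hi.1, if_pos (by omega), mul_left_comm, ← exp_add,
      sub_add_sub_cancel]

theorem todaPotential_BC_eq (hn : 1 ≤ n) (x z : ℕ → ℝ) :
    -(g 1 / 2) * exp (z 1) + g 1 ^ 2 / 2 * exp (2 * z 1)
        + ∑ i ∈ Icc 1 (n - 1), g (i + 1) * exp (z (i + 1) - z i)
      = -todaKernelLink n g x z 1 / 2 + todaKernelLink n g x z 1 ^ 2 / 2
        + ∑ i ∈ Icc 1 (n - 1), exp (x i - z i) * todaKernelLink n g x z (i + 1) := by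
  refine congrArg₂ (· + ·) ?_ (sum_congr rfl fun i hi => ?_)
  · rw [todaKernelLink_one hn, mul_pow, ← exp_nat_mul]
    push_cast
    ring
  · rw [mem_Icc] at hi
    rw [todaKernelLink_succ hi.1, if_pos (by omega), mul_left_comm, ← exp_add,
      sub_add_sub_cancel']

end

/-- The kernel `Q(x,z) = exp(−(g_1 e^{z_1} + Σ_{i=1}^{n−1}(e^{x_i−z_i} + g_{i+1} e^{z_{i+1}−x_i})
+ e^{x_n−z_n}))` intertwines the quadratic Hamiltonians of the `B_n` and `BC*_n` Toda chains. -/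
theorem stmt_3 (n : ℕ) (hn : 2 ≤ n) (g : ℕ → ℝ) :
    let Q : (ℕ → ℝ) → (ℕ → ℝ) → ℝ := fun x z =>
      Real.exp (-(g 1 * Real.exp (z 1)
        + (∑ i ∈ Finset.Icc 1 (n - 1),
            (Real.exp (x i - z i) + g (i + 1) * Real.exp (z (i + 1) - x i)))
        + Real.exp (x n - z n)))
    ∀ x z : ℕ → ℝ,
      -(1 / 2) * (∑ i ∈ Finset.Icc 1 n, pd2 (fun x' => Q x' z) i x)
          + (g 1 * Real.exp (x 1)
              + ∑ i ∈ Finset.Icc 1 (n - 1), g (i + 1) * Real.exp (x (i + 1) - x i)) * Q x z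
        = -(1 / 2) * (∑ i ∈ Finset.Icc 1 n, pd2 (fun z' => Q x z') i z)
          + (-(g 1 / 2) * Real.exp (z 1) + g 1 ^ 2 / 2 * Real.exp (2 * z 1)
              + ∑ i ∈ Finset.Icc 1 (n - 1), g (i + 1) * Real.exp (z (i + 1) - z i)) * Q x z := by
  intro Q x z
  have hn₁ : 1 ≤ n := by omega
  have hQ : Q = fun x z => exp (-todaKernelExponent n g x z) := rfl
  simp only [hQ]
  rw [sum_pd2_todaKernel_x hn₁, sum_pd2_todaKernel_z hn₁, todaPotential_B_eq hn₁ x z,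
    todaPotential_BC_eq hn₁ x z]
  have hw : todaKernelLink n g x z (n + 1) = 0 := by simp [todaKernelLink]
  linear_combination exp (-todaKernelExponent n g x z) *
    toda_intertwining_polynomial_identity (fun j => exp (x j - z j)) (todaKernelLink n g x z) hn₁ hw
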